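/- The following statements are equivalent: (i) P(I(Θ) ∈ ℤ) = 1; (ii) P(lim_{|j|→∞} ‖Θ_j‖ = 0) = 1; (iii) P(Σ_{j∈ℤ} ‖Θ_j‖^α < ∞) = 1. -/

import Mathlib

open MeasureTheory ProbabilityTheory Set Filter
open scoped ENNReal NNReal Topology

noncomputable section

/-- The iterated backshift operator: `(B^k x) j = x (j - k)`. -/
def backshift {V : Type*} (k : ℤ) (x : ℤ → V) : ℤ → V := fun j => x (j - k)

/-- `InfargmaxAt x j` is the event `I(x) = j` for the infargmax functional `I`:
the first time the supremum of the norms is achieved is `j`, i.e.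
`sup_{i<j} ‖x_i‖ < ‖x_j‖` and `sup_{i>j} ‖x_i‖ ≤ ‖x_j‖`.  (`I(x) ∈ ℤ` is then
expressed as `∃ j, InfargmaxAt x j`.) -/
def InfargmaxAt {V : Type*} [NormedAddCommGroup V] (x : ℤ → V) (j : ℤ) : Prop :=
  (⨆ i : {i : ℤ // i < j}, (‖x i.1‖₊ : ℝ≥0∞)) < (‖x j‖₊ : ℝ≥0∞) ∧
    (⨆ i : {i : ℤ // j < i}, (‖x i.1‖₊ : ℝ≥0∞)) ≤ (‖x j‖₊ : ℝ≥0∞)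

/-!
The implications (iii) ⇒ (ii) ⇒ (i) hold pointwise: the terms of a convergent series tend to
zero, and a sequence tending to zero with `‖Θ₀‖ = 1` attains its supremum, at a first index.

For (i) ⇒ (iii), the polar decomposition together with the shift invariance of `ν` gives the
time-change formula `P(I(Θ) = j, Θ ∈ S) = E[‖Θ_{-j}‖^α; I(Θ) = 0, Θ ∈ S]` for every
shift- and scale-invariant `S`. Summing over `j`,
`P(I(Θ) ∈ ℤ, Θ ∈ S) = E[Σ_k ‖Θ_k‖^α; I(Θ) = 0, Θ ∈ S]`. For `S = {y | Σ_k ‖y_k‖^α = ∞}` the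
right side is `∞ · P(I(Θ) = 0, Θ ∈ S)` while the left side is at most `1`, so both vanish.
-/

section Backshift

variable {W : Type*}

lemma backshift_zero : (backshift 0 : (ℤ → W) → ℤ → W) = id := by
  funext x j
  simp [backshift]

lemma backshift_add (a b : ℤ) :
    (backshift (a + b) : (ℤ → W) → ℤ → W) = backshift a ∘ backshift b := by
  funext x j
  simp [backshift, sub_sub]

lemma measurable_backshift [MeasurableSpace W] (k : ℤ) :
    Measurable (backshift k : (ℤ → W) → ℤ → W) :=
  measurable_pi_lambda _ fun j => measurable_pi_apply (j - k)

lemma map_backshift_eq_self [MeasurableSpace W] {ν : Measure (ℤ → W)}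
    (h : ν.map (backshift 1) = ν) (k : ℤ) : ν.map (backshift k) = ν := by
  have hadd : ∀ a b, ν.map (backshift a) = ν → ν.map (backshift b) = ν →
      ν.map (backshift (a + b)) = ν := fun a b ha hb => by
    rw [backshift_add, ← Measure.map_map (measurable_backshift a) (measurable_backshift b), hb, ha]
  have hneg : ν.map (backshift (-1)) = ν := by
    conv_lhs => rw [← h]
    rw [Measure.map_map (measurable_backshift _) (measurable_backshift _), ← backshift_add,
      neg_add_cancel, backshift_zero, Measure.map_id]
  induction k using Int.induction_on with
  | zero => rw [backshift_zero, Measure.map_id]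
  | succ k ih => exact hadd _ _ ih h
  | pred k ih => exact sub_eq_add_neg (-(k : ℤ)) 1 ▸ hadd _ _ ih hneg

def IsShiftInvariant (S : Set (ℤ → W)) : Prop := ∀ (k : ℤ) (x : ℤ → W), backshift k x ∈ S ↔ x ∈ S

end Backshift

lemma exists_iSup_lt_and_iSup_le_of_tendsto_zero {f : ℤ → ℝ≥0∞}
    (hf : Tendsto f cofinite (𝓝 0)) (h0 : f 0 ≠ 0) :
    ∃ j, (⨆ i : {i : ℤ // i < j}, f i) < f j ∧ (⨆ i : {i : ℤ // j < i}, f i) ≤ f j := by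
  obtain ⟨b, hb0, hb⟩ := exists_between (pos_iff_ne_zero.2 h0)
  have hfin : {i | ¬ f i < b}.Finite := eventually_cofinite.1 (hf.eventually_lt_const hb0)
  set F := hfin.toFinset
  have hF : ∀ i, i ∉ F → f i < b := fun i hi => by simpa [F] using hi
  have h0F : 0 ∈ F := by simpa [F] using hb.le
  -- the lexicographic maximum of `(f i, -i)` over `F` is the first maximiser of `f`
  obtain ⟨j, -, hj⟩ := F.exists_max_image (fun i => toLex (f i, -i)) ⟨0, h0F⟩
  have hbj : b < f j := hb.trans_le (Prod.Lex.toLex_le_toLex'.1 (hj 0 h0F)).1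
  have hle : ∀ i, f i ≤ f j := fun i => by
    by_cases hi : i ∈ F
    · exact (Prod.Lex.toLex_le_toLex'.1 (hj i hi)).1
    · exact (hF i hi).le.trans hbj.le
  have hlt : ∀ i ∈ F, i < j → f i < f j := fun i hi hij => by
    obtain ⟨hfi, heq⟩ := Prod.Lex.toLex_le_toLex'.1 (hj i hi)
    exact hfi.lt_of_ne fun h => (neg_le_neg_iff.1 (heq h)).not_gt hij
  refine ⟨j, ?_, iSup_le fun i => hle i⟩
  calc (⨆ i : {i : ℤ // i < j}, f i) ≤ max b ((F.filter (· < j)).sup f) := by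
        refine iSup_le fun i => ?_
        by_cases hi : i.1 ∈ F
        · exact le_max_of_le_right (Finset.le_sup (Finset.mem_filter.2 ⟨hi, i.2⟩))
        · exact le_max_of_le_left (hF i hi).le
    _ < f j := max_lt hbj ((Finset.sup_lt_iff (bot_le.trans_lt hbj)).2 fun i hi =>
        hlt i (Finset.mem_filter.1 hi).1 (Finset.mem_filter.1 hi).2)

lemma lintegral_paretoDensity_one_lt_mul {α : ℝ} (hα : 0 < α) {t : ℝ} (ht : 0 ≤ t) :
    ∫⁻ r in Ioi (0 : ℝ), {r | 1 < r * t}.indicator (fun r => ENNReal.ofReal (α * r ^ (-α - 1))) r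
      = ENNReal.ofReal t ^ α := by
  rcases ht.eq_or_lt with rfl | ht
  · simp [ENNReal.zero_rpow_of_pos hα]
  have hset : Ioi (0 : ℝ) ∩ {r | 1 < r * t} = Ioi t⁻¹ := by
    ext r
    refine ⟨fun h => (inv_lt_iff_one_lt_mul₀ ht).2 h.2, fun h => ⟨(inv_pos.2 ht).trans h, ?_⟩⟩
    exact (inv_lt_iff_one_lt_mul₀ ht).1 h
  have hint : IntegrableOn (fun r : ℝ => α * r ^ (-α - 1)) (Ioi t⁻¹) :=
    (integrableOn_Ioi_rpow_of_lt (by linarith) (inv_pos.2 ht)).const_mul α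
  rw [lintegral_indicator (measurableSet_lt measurable_const (by fun_prop)),
    Measure.restrict_restrict (measurableSet_lt measurable_const (by fun_prop)), inter_comm, hset,
    ← ofReal_integral_eq_lintegral_ofReal hint ((ae_restrict_iff' measurableSet_Ioi).2
      (ae_of_all _ fun r hr => by have := (inv_pos.2 ht).trans hr; positivity)),
    integral_const_mul, integral_Ioi_rpow_of_lt (by linarith) (inv_pos.2 ht),
    ENNReal.ofReal_rpow_of_pos ht]
  congr 1
  rw [sub_add_cancel, Real.inv_rpow ht.le, Real.rpow_neg ht.le, inv_inv]
  field_simp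

section

variable {V : Type*} [NormedAddCommGroup V]

lemma exists_infargmaxAt_of_tendsto {x : ℤ → V} (h0 : x 0 ≠ 0)
    (hx : Tendsto (fun j => ‖x j‖) cofinite (𝓝 0)) : ∃ j, InfargmaxAt x j := by
  refine exists_iSup_lt_and_iSup_le_of_tendsto_zero (f := fun i => ‖x i‖ₑ) ?_ (by simpa using h0)
  simpa [ofReal_norm] using ENNReal.tendsto_ofReal hx

namespace InfargmaxAt

lemma ne_zero {x : ℤ → V} {j : ℤ} (h : InfargmaxAt x j) : x j ≠ 0 := by
  simpa using (zero_le : (0 : ℝ≥0∞) ≤ _).trans_lt h.1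

lemma unique {x : ℤ → V} {j j' : ℤ} (h : InfargmaxAt x j) (h' : InfargmaxAt x j') : j = j' := by
  by_contra hne
  wlog hlt : j < j' generalizing j j'
  · exact this h' h (Ne.symm hne) ((Ne.symm hne).lt_of_le (not_lt.1 hlt))
  have h₁ : (‖x j'‖₊ : ℝ≥0∞) ≤ ‖x j‖₊ :=
    (le_iSup (fun i : {i : ℤ // j < i} => (‖x i.1‖₊ : ℝ≥0∞)) ⟨j', hlt⟩).trans h.2
  have h₂ : (‖x j‖₊ : ℝ≥0∞) < ‖x j'‖₊ :=
    (le_iSup (fun i : {i : ℤ // i < j'} => (‖x i.1‖₊ : ℝ≥0∞)) ⟨j, hlt⟩).trans_lt h'.1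
  exact (h₁.trans_lt h₂).false

end InfargmaxAt

lemma infargmaxAt_smul_iff [NormedSpace ℝ V] {c : ℝ} (hc : 0 < c) (x : ℤ → V) (j : ℤ) :
    InfargmaxAt (c • x) j ↔ InfargmaxAt x j := by
  have hc₀ : (‖c‖₊ : ℝ≥0∞) ≠ 0 := by simp [hc.ne']
  simp only [InfargmaxAt, Pi.smul_apply, nnnorm_smul, ENNReal.coe_mul, ← ENNReal.mul_iSup,
    ENNReal.mul_lt_mul_iff_right hc₀ ENNReal.coe_ne_top,
    ENNReal.mul_le_mul_iff_right hc₀ ENNReal.coe_ne_top]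

lemma infargmaxAt_backshift_iff (k : ℤ) (x : ℤ → V) (j : ℤ) :
    InfargmaxAt (backshift k x) j ↔ InfargmaxAt x (j - k) := by
  have hlt := (Equiv.subtypeEquiv (p := (· < j)) (q := (· < j - k)) (Equiv.subRight k)
    fun i => by simp).iSup_comp (g := fun i => (‖x i.1‖₊ : ℝ≥0∞))
  have hgt := (Equiv.subtypeEquiv (p := (j < ·)) (q := (j - k < ·)) (Equiv.subRight k)
    fun i => by simp).iSup_comp (g := fun i => (‖x i.1‖₊ : ℝ≥0∞))
  simp only [Equiv.subtypeEquiv_apply, Equiv.subRight_apply] at hlt hgt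
  simp only [InfargmaxAt, backshift, hlt, hgt]

lemma measurableSet_infargmaxAt [MeasurableSpace V] [OpensMeasurableSpace V] (j : ℤ) :
    MeasurableSet {x : ℤ → V | InfargmaxAt x j} := by
  have hm : ∀ i : ℤ, Measurable fun x : ℤ → V => (‖x i‖₊ : ℝ≥0∞) := fun i => by fun_prop
  exact (measurableSet_lt (.iSup fun (i : {i : ℤ // _}) => hm i.1) (hm j)).inter
    (measurableSet_le (.iSup fun (i : {i : ℤ // _}) => hm i.1) (hm j))

lemma tendsto_norm_of_summable_norm_rpow {α : ℝ} (hα : 0 < α) {x : ℤ → V}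
    (hs : Summable fun j => ‖x j‖ ^ α) : Tendsto (fun j => ‖x j‖) cofinite (𝓝 0) := by
  have h := ((Real.continuousAt_rpow_const 0 α⁻¹ (.inr (by positivity))).tendsto).comp
    hs.tendsto_cofinite_zero
  simpa [Function.comp_def, Real.rpow_rpow_inv (norm_nonneg _) hα.ne',
    Real.zero_rpow (inv_pos.2 hα).ne'] using h

def normRpowSum (α : ℝ) (x : ℤ → V) : ℝ≥0∞ := ∑' k, ‖x k‖ₑ ^ α

lemma summable_norm_rpow_iff {α : ℝ} (hα : 0 ≤ α) (x : ℤ → V) :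
    (Summable fun j => ‖x j‖ ^ α) ↔ normRpowSum α x ≠ ⊤ := by
  simp only [normRpowSum, enorm_eq_nnnorm, ← ENNReal.coe_rpow_of_nonneg _ hα,
    ENNReal.tsum_coe_ne_top_iff_summable, ← NNReal.summable_coe, NNReal.coe_rpow, coe_nnnorm]

lemma normRpowSum_smul [NormedSpace ℝ V] {α : ℝ} (hα : 0 ≤ α) (c : ℝ) (x : ℤ → V) :
    normRpowSum α (c • x) = ‖c‖ₑ ^ α * normRpowSum α x := by
  simp only [normRpowSum, Pi.smul_apply, enorm_smul, ENNReal.mul_rpow_of_nonneg _ _ hα,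
    ENNReal.tsum_mul_left]

lemma normRpowSum_backshift (α : ℝ) (k : ℤ) (x : ℤ → V) :
    normRpowSum α (backshift k x) = normRpowSum α x :=
  (Equiv.subRight k).tsum_eq fun i => ‖x i‖ₑ ^ α

lemma measurable_normRpowSum [MeasurableSpace V] [OpensMeasurableSpace V] (α : ℝ) :
    Measurable (normRpowSum α : (ℤ → V) → ℝ≥0∞) :=
  .tsum fun k => by fun_prop

def IsConeInvariant {E : Type*} [SMul ℝ E] (A : Set E) : Prop :=
  ∀ c : ℝ, 0 < c → ∀ x, c • x ∈ A ↔ x ∈ A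

def HasPolarDecomposition [NormedSpace ℝ V] [MeasurableSpace V] {Ω : Type*} [MeasurableSpace Ω]
    (ν : Measure (ℤ → V)) (P : Measure Ω) (Θ : Ω → ℤ → V) (α : ℝ) : Prop :=
  ∀ H : (ℤ → V) → ℝ≥0∞, Measurable H →
    ∫⁻ y in {y : ℤ → V | y 0 ≠ 0}, H y ∂ν
      = ∫⁻ r in Ioi (0 : ℝ), (∫⁻ ω, H (r • Θ ω) ∂P) * ENNReal.ofReal (α * r ^ (-α - 1))

variable [NormedSpace ℝ V] [MeasurableSpace V] [OpensMeasurableSpace V]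
  {Ω : Type*} [MeasurableSpace Ω] {P : Measure Ω} {ν : Measure (ℤ → V)} {Θ : Ω → ℤ → V} {α : ℝ}

lemma HasPolarDecomposition.measure_inter_one_lt_norm [SFinite P]
    (hpolar : HasPolarDecomposition ν P Θ α) (hα : 0 < α) (hΘ : Measurable Θ)
    {A : Set (ℤ → V)} (hA : MeasurableSet A) (hAc : IsConeInvariant A) (k : ℤ) :
    ν ({y | y 0 ≠ 0} ∩ (A ∩ {y | 1 < ‖y k‖})) = ∫⁻ ω in Θ ⁻¹' A, ‖Θ ω k‖ₑ ^ α ∂P := by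
  set E := A ∩ {y : ℤ → V | 1 < ‖y k‖}
  have hE : MeasurableSet E := hA.inter (measurableSet_lt measurable_const (by fun_prop))
  set dens : ℝ → ℝ≥0∞ := fun r => ENNReal.ofReal (α * r ^ (-α - 1))
  set g : ℝ → Ω → ℝ≥0∞ := fun r ω => {r | 1 < r * ‖Θ ω k‖}.indicator dens r
  have hg : Measurable (Function.uncurry g) :=
    Measurable.indicator (f := fun p : ℝ × Ω => dens p.1) (by fun_prop)
      (measurableSet_lt measurable_const (by fun_prop))
  have hslice : ∀ r ∈ Ioi (0 : ℝ), (∫⁻ ω, E.indicator 1 (r • Θ ω) ∂P) * dens r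
      = ∫⁻ ω in Θ ⁻¹' A, g r ω ∂P := fun r hr => by
    rw [← lintegral_mul_const' _ _ ENNReal.ofReal_ne_top, ← lintegral_indicator (hΘ hA)]
    congr 1
    funext ω
    have hnorm : ‖r • Θ ω k‖ = r * ‖Θ ω k‖ := by
      rw [norm_smul, Real.norm_of_nonneg (le_of_lt hr)]
    by_cases hω : Θ ω ∈ A <;> by_cases hrω : 1 < r * ‖Θ ω k‖ <;>
      simp [E, g, dens, hω, hrω, hnorm, hAc r hr]
  calc ν ({y | y 0 ≠ 0} ∩ E)
      = ∫⁻ y in {y | y 0 ≠ 0}, E.indicator 1 y ∂ν := by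
        rw [lintegral_indicator_one hE, Measure.restrict_apply hE, inter_comm]
    _ = ∫⁻ r in Ioi (0 : ℝ), ∫⁻ ω in Θ ⁻¹' A, g r ω ∂P := by
        rw [hpolar _ (measurable_one.indicator hE)]
        exact setLIntegral_congr_fun measurableSet_Ioi hslice
    _ = ∫⁻ ω in Θ ⁻¹' A, (∫⁻ r in Ioi (0 : ℝ), g r ω) ∂P :=
        lintegral_lintegral_swap hg.aemeasurable
    _ = ∫⁻ ω in Θ ⁻¹' A, ‖Θ ω k‖ₑ ^ α ∂P := by
        simp only [g, dens, lintegral_paretoDensity_one_lt_mul hα (norm_nonneg _), ofReal_norm]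

lemma measure_infargmaxAt_eq_setLIntegral [SFinite P] (hα : 0 < α)
    (hpolar : HasPolarDecomposition ν P Θ α) (hshift : ν.map (backshift 1) = ν)
    (hΘ : Measurable Θ) (hΘ0 : ∀ᵐ ω ∂P, ‖Θ ω 0‖ = 1)
    {S : Set (ℤ → V)} (hS : MeasurableSet S) (hSc : IsConeInvariant S) (hSs : IsShiftInvariant S)
    (j : ℤ) :
    P {ω | InfargmaxAt (Θ ω) j ∧ Θ ω ∈ S}
      = ∫⁻ ω in {ω | InfargmaxAt (Θ ω) 0 ∧ Θ ω ∈ S}, ‖Θ ω (-j)‖ₑ ^ α ∂P := by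
  set A : ℤ → Set (ℤ → V) := fun j => {x | InfargmaxAt x j ∧ x ∈ S}
  have hA : ∀ j, MeasurableSet (A j) := fun j => (measurableSet_infargmaxAt j).inter hS
  have hAc : ∀ j, IsConeInvariant (A j) := fun j c hc x =>
    and_congr (infargmaxAt_smul_iff hc x j) (hSc c hc x)
  have hmeas : MeasurableSet ({y : ℤ → V | y 0 ≠ 0} ∩ (A j ∩ {y | 1 < ‖y 0‖})) :=
    (measurable_pi_apply 0 (measurableSet_singleton 0)).compl.inter
      ((hA j).inter (measurableSet_lt measurable_const (by fun_prop)))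
  calc P (Θ ⁻¹' A j)
      = ∫⁻ ω in Θ ⁻¹' A j, ‖Θ ω 0‖ₑ ^ α ∂P := by
        rw [← setLIntegral_one]
        refine setLIntegral_congr_fun_ae (hΘ (hA j)) ?_
        filter_upwards [hΘ0] with ω h _
        simp [← ofReal_norm, h]
    _ = ν ({y | y 0 ≠ 0} ∩ (A j ∩ {y | 1 < ‖y 0‖})) :=
        (hpolar.measure_inter_one_lt_norm hα hΘ (hA j) (hAc j) 0).symm
    _ = ν ({y | y 0 ≠ 0} ∩ (A 0 ∩ {y | 1 < ‖y (-j)‖})) := by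
        -- `backshift j` moves the infargmax from `j` to `0` and the coordinate `0` to `-j`
        conv_lhs => rw [← map_backshift_eq_self hshift j]
        rw [Measure.map_apply (measurable_backshift j) hmeas]
        congr 1
        ext x
        simp only [A, mem_preimage, mem_inter_iff, mem_ofPred_eq, infargmaxAt_backshift_iff,
          sub_self, hSs j x]
        simp only [backshift, zero_sub]
        have h₀ : InfargmaxAt x 0 → x 0 ≠ 0 := InfargmaxAt.ne_zero
        have hj : 1 < ‖x (-j)‖ → x (-j) ≠ 0 := fun h => norm_pos_iff.1 (one_pos.trans h)
        tauto
    _ = ∫⁻ ω in Θ ⁻¹' A 0, ‖Θ ω (-j)‖ₑ ^ α ∂P :=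
        hpolar.measure_inter_one_lt_norm hα hΘ (hA 0) (hAc 0) (-j)

lemma measure_exists_infargmaxAt_eq_setLIntegral [SFinite P] (hα : 0 < α)
    (hpolar : HasPolarDecomposition ν P Θ α) (hshift : ν.map (backshift 1) = ν)
    (hΘ : Measurable Θ) (hΘ0 : ∀ᵐ ω ∂P, ‖Θ ω 0‖ = 1)
    {S : Set (ℤ → V)} (hS : MeasurableSet S) (hSc : IsConeInvariant S) (hSs : IsShiftInvariant S) :
    P {ω | (∃ j, InfargmaxAt (Θ ω) j) ∧ Θ ω ∈ S}
      = ∫⁻ ω in {ω | InfargmaxAt (Θ ω) 0 ∧ Θ ω ∈ S}, normRpowSum α (Θ ω) ∂P := by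
  have hdisj : Pairwise
      (Function.onFun Disjoint fun j : ℤ => {ω | InfargmaxAt (Θ ω) j ∧ Θ ω ∈ S}) :=
    fun j j' hne => disjoint_left.2 fun ω hj hj' => hne (hj.1.unique hj'.1)
  calc P {ω | (∃ j, InfargmaxAt (Θ ω) j) ∧ Θ ω ∈ S}
      = P (⋃ j, {ω | InfargmaxAt (Θ ω) j ∧ Θ ω ∈ S}) := by
        simp only [iUnion_ofPred, exists_and_right]
    _ = ∑' j, ∫⁻ ω in {ω | InfargmaxAt (Θ ω) 0 ∧ Θ ω ∈ S}, ‖Θ ω (-j)‖ₑ ^ α ∂P := by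
        rw [measure_iUnion hdisj fun j => hΘ ((measurableSet_infargmaxAt j).inter hS)]
        exact tsum_congr fun j =>
          measure_infargmaxAt_eq_setLIntegral hα hpolar hshift hΘ hΘ0 hS hSc hSs j
    _ = ∫⁻ ω in {ω | InfargmaxAt (Θ ω) 0 ∧ Θ ω ∈ S}, normRpowSum α (Θ ω) ∂P := by
        rw [← lintegral_tsum fun j => by fun_prop]
        exact lintegral_congr fun ω => (Equiv.neg ℤ).tsum_eq fun k => ‖Θ ω k‖ₑ ^ α

lemma ae_summable_norm_rpow_of_exists_infargmaxAt [IsFiniteMeasure P] (hα : 0 < α)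
    (hpolar : HasPolarDecomposition ν P Θ α) (hshift : ν.map (backshift 1) = ν)
    (hΘ : Measurable Θ) (hΘ0 : ∀ᵐ ω ∂P, ‖Θ ω 0‖ = 1) :
    ∀ᵐ ω ∂P, (∃ j, InfargmaxAt (Θ ω) j) → Summable fun j => ‖Θ ω j‖ ^ α := by
  set S : Set (ℤ → V) := {x | normRpowSum α x = ⊤}
  have hS : MeasurableSet S := measurable_normRpowSum α (measurableSet_singleton ⊤)
  have hSc : IsConeInvariant S := fun c hc x => by
    simp [S, normRpowSum_smul hα.le, ENNReal.mul_eq_top, hc.ne']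
  have hSs : IsShiftInvariant S := fun k x => by simp [S, normRpowSum_backshift]
  set D := {ω | InfargmaxAt (Θ ω) 0 ∧ Θ ω ∈ S}
  have hDmeas : MeasurableSet D := hΘ ((measurableSet_infargmaxAt 0).inter hS)
  have hD : ∫⁻ ω in D, normRpowSum α (Θ ω) ∂P = ⊤ * P D := by
    rw [setLIntegral_congr_fun hDmeas fun ω hω => hω.2, setLIntegral_const]
  have hnull : P {ω | (∃ j, InfargmaxAt (Θ ω) j) ∧ Θ ω ∈ S} = 0 := by
    have hfin := measure_ne_top P {ω | (∃ j, InfargmaxAt (Θ ω) j) ∧ Θ ω ∈ S}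
    rw [measure_exists_infargmaxAt_eq_setLIntegral hα hpolar hshift hΘ hΘ0 hS hSc hSs, hD]
      at hfin ⊢
    rcases eq_or_ne (P D) 0 with h | h
    · rw [h, mul_zero]
    · exact absurd (ENNReal.top_mul h) hfin
  filter_upwards [measure_eq_zero_iff_ae_notMem.1 hnull] with ω hω hI
  exact (summable_norm_rpow_iff hα.le _).2 fun hT => hω ⟨hI, hT⟩

end

lemma measure_setOf_eq_one_of_ae_imp {Ω : Type*} [MeasurableSpace Ω] {P : Measure Ω}
    [IsProbabilityMeasure P] {p q : Ω → Prop} (h : ∀ᵐ ω ∂P, p ω → q ω)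
    (hp : P {ω | p ω} = 1) : P {ω | q ω} = 1 :=
  le_antisymm prob_le_one (hp ▸ measure_mono_ae h)

theorem statement6_general
    -- `V` plays the role of `ℝ^d` (`d ≥ 1`) equipped with an arbitrary norm
    {V : Type*} [NormedAddCommGroup V] [NormedSpace ℝ V] [FiniteDimensional ℝ V]
    [MeasurableSpace V] [BorelSpace V]
    (α : ℝ) (hα : 0 < α)
    -- the tail measure and its properties
    (ν : Measure (ℤ → V))
    (hνshift : ν.map (backshift 1) = ν)
    -- the tail process `Y` and the spectral tail process `Θ`
    {Ω : Type*} [MeasurableSpace Ω] (P : Measure Ω) [IsProbabilityMeasure P]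
    (Y : Ω → ℤ → V) (hYmeas : Measurable Y)
    (Θ : Ω → ℤ → V) (hΘdef : ∀ ω, Θ ω = ‖Y ω 0‖⁻¹ • Y ω)
    (hPareto : ∀ u : ℝ, 1 ≤ u → P {ω | u < ‖Y ω 0‖} = ENNReal.ofReal (u ^ (-α)))
    (hpolar : ∀ H : (ℤ → V) → ℝ≥0∞, Measurable H →
      ∫⁻ y in {y : ℤ → V | y 0 ≠ 0}, H y ∂ν
        = ∫⁻ r in Ioi (0 : ℝ),
            (∫⁻ ω, H (r • Θ ω) ∂P) * ENNReal.ofReal (α * r ^ (-α - 1)))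
    :
    (P {ω | ∃ j : ℤ, InfargmaxAt (Θ ω) j} = 1 ↔
        P {ω | Tendsto (fun j : ℤ => ‖Θ ω j‖) cofinite (𝓝 0)} = 1) ∧
      (P {ω | Tendsto (fun j : ℤ => ‖Θ ω j‖) cofinite (𝓝 0)} = 1 ↔
        P {ω | Summable fun j : ℤ => ‖Θ ω j‖ ^ α} = 1) := by
  have hΘ : Measurable Θ := by
    rw [show Θ = _ from funext hΘdef]
    fun_prop
  have hΘ0 : ∀ᵐ ω ∂P, ‖Θ ω 0‖ = 1 := by
    have hY : ∀ᵐ ω ∂P, 1 < ‖Y ω 0‖ :=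
      (ae_iff_prob_eq_one (by fun_prop)).2 (by simpa using hPareto 1 le_rfl)
    filter_upwards [hY] with ω hω
    rw [hΘdef, Pi.smul_apply, norm_smul, norm_inv, norm_norm,
      inv_mul_cancel₀ (by positivity)]
  have hiii_ii : ∀ᵐ ω ∂P, (Summable fun j => ‖Θ ω j‖ ^ α) →
      Tendsto (fun j => ‖Θ ω j‖) cofinite (𝓝 0) :=
    ae_of_all _ fun _ => tendsto_norm_of_summable_norm_rpow hα
  have hii_i : ∀ᵐ ω ∂P, Tendsto (fun j => ‖Θ ω j‖) cofinite (𝓝 0) →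
      ∃ j, InfargmaxAt (Θ ω) j := by
    filter_upwards [hΘ0] with ω h0
    exact exists_infargmaxAt_of_tendsto (norm_ne_zero_iff.1 (h0 ▸ one_ne_zero))
  have hi_iii := ae_summable_norm_rpow_of_exists_infargmaxAt hα hpolar hνshift hΘ hΘ0
  have mono := @measure_setOf_eq_one_of_ae_imp _ _ P _
  exact ⟨⟨fun h => mono hiii_ii (mono hi_iii h), mono hii_i⟩,
    ⟨fun h => mono hi_iii (mono hii_i h), mono hiii_ii⟩⟩

/-- **Equivalent formulations of the tail process vanishing at infinity.**
The following are equivalent: (i) `P(I(Θ) ∈ ℤ) = 1`;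
(ii) `P(lim_{|j|→∞} ‖Θ_j‖ = 0) = 1`; (iii) `P(Σ_{j∈ℤ} ‖Θ_j‖^α < ∞) = 1`. -/
theorem statement6
    -- `V` plays the role of `ℝ^d` (`d ≥ 1`) equipped with an arbitrary norm
    {V : Type*} [NormedAddCommGroup V] [NormedSpace ℝ V] [FiniteDimensional ℝ V]
    [Nontrivial V] [MeasurableSpace V] [BorelSpace V]
    (α : ℝ) (hα : 0 < α)
    -- the tail measure and its properties
    (ν : Measure (ℤ → V))
    (hν0 : ν {0} = 0)
    (hν1 : ν {y : ℤ → V | 1 < ‖y 0‖} = 1)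
    (hνshift : ν.map (backshift 1) = ν)
    (hνhom : ∀ A : Set (ℤ → V), MeasurableSet A → ∀ c : ℝ, 0 < c →
      ν ((fun x => c • x) '' A) = ENNReal.ofReal (c ^ (-α)) * ν A)
    -- the tail process `Y` and the spectral tail process `Θ`
    {Ω : Type*} [MeasurableSpace Ω] (P : Measure Ω) [IsProbabilityMeasure P]
    (Y : Ω → ℤ → V) (hYmeas : Measurable Y)
    (hYlaw : P.map Y = ν.restrict {y : ℤ → V | 1 < ‖y 0‖})
    (Θ : Ω → ℤ → V) (hΘdef : ∀ ω, Θ ω = ‖Y ω 0‖⁻¹ • Y ω)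
    (hPareto : ∀ u : ℝ, 1 ≤ u → P {ω | u < ‖Y ω 0‖} = ENNReal.ofReal (u ^ (-α)))
    (hindep : IndepFun (fun ω => ‖Y ω 0‖) Θ P)
    (hpolar : ∀ H : (ℤ → V) → ℝ≥0∞, Measurable H →
      ∫⁻ y in {y : ℤ → V | y 0 ≠ 0}, H y ∂ν
        = ∫⁻ r in Ioi (0 : ℝ),
            (∫⁻ ω, H (r • Θ ω) ∂P) * ENNReal.ofReal (α * r ^ (-α - 1)))
    :
    (P {ω | ∃ j : ℤ, InfargmaxAt (Θ ω) j} = 1 ↔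
        P {ω | Tendsto (fun j : ℤ => ‖Θ ω j‖) cofinite (𝓝 0)} = 1) ∧
      (P {ω | Tendsto (fun j : ℤ => ‖Θ ω j‖) cofinite (𝓝 0)} = 1 ↔
        P {ω | Summable fun j : ℤ => ‖Θ ω j‖ ^ α} = 1) :=
  statement6_general α hα ν hνshift P Y hYmeas Θ hΘdef hPareto hpolar
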